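/- arXiv:2210.15825 — 4 statements merged into one kernel-verified Lean document; each statement's English description precedes it below -/
import Mathlib

section
/- Let {x^k} be a bounded sequence in ℝ^n with x^k_i > 0 for all i and all k, let μ_k > 0 with μ_k → 0, and define z^k := μ_k ∇b(x^k), where each b_i′ is continuous and nonpositive on (0,∞). Then for every i = 1,…,n, min{x^k_i, −z^k_i} → 0 as k → ∞. -/
open Filter Topology

/-- Lemma 2, asymptotic complementarity.
Let {x^k} be a bounded sequence in ℝ^n with x^k_i > 0 for all i and all k,
let μ_k > 0 with μ_k → 0, and define z^k := μ_k ∇b(x^k), where each b_i′ is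
continuous and nonpositive on (0, ∞).  Then for every i = 1, …, n,
min{x^k_i, −z^k_i} → 0 as k → ∞. -/
theorem stmt1 {n : ℕ}
    (x : ℕ → EuclideanSpace ℝ (Fin n))
    (hbdd : ∃ R : ℝ, ∀ k, ‖x k‖ ≤ R)
    (hxpos : ∀ k, ∀ i, 0 < x k i)
    (μ : ℕ → ℝ) (hμpos : ∀ k, 0 < μ k)
    (hμto0 : Tendsto μ atTop (nhds 0))
    -- the derivatives b_i' of the barrier functions
    (b' : Fin n → ℝ → ℝ)
    (hb'cont : ∀ i, ContinuousOn (b' i) (Set.Ioi (0 : ℝ)))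
    (hb'nonpos : ∀ i t, 0 < t → b' i t ≤ 0)
    -- z^k := μ_k ∇b(x^k)
    (z : ℕ → EuclideanSpace ℝ (Fin n))
    (hz : ∀ k, ∀ i, z k i = μ k * b' i (x k i)) :
    ∀ i, Tendsto (fun k => min (x k i) (-(z k i))) atTop (nhds 0) := by
  intro i
  obtain ⟨R, hR⟩ := hbdd
  have hcoord : ∀ k, |x k i| ≤ ‖x k‖ := by
    intro k
    rw [EuclideanSpace.norm_eq]
    have h1 : |x k i| = Real.sqrt (‖x k i‖ ^ 2) := by
      rw [Real.norm_eq_abs, Real.sqrt_sq (abs_nonneg _)]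
    rw [h1]
    apply Real.sqrt_le_sqrt
    exact Finset.single_le_sum (f := fun j => ‖x k j‖ ^ 2)
      (fun j _ => by positivity) (Finset.mem_univ i)
  rw [Metric.tendsto_atTop]
  intro ε hε
  set M := max R ε with hM
  have hsub : Set.Icc ε M ⊆ Set.Ioi (0 : ℝ) := fun t ht => lt_of_lt_of_le hε ht.1
  obtain ⟨C, hC⟩ := isCompact_Icc.exists_bound_of_continuousOn ((hb'cont i).mono hsub)
  set C' := max C 1 with hC'
  have hC'pos : 0 < C' := lt_of_lt_of_le one_pos (le_max_right _ _)
  rw [Metric.tendsto_atTop] at hμto0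
  obtain ⟨N, hN⟩ := hμto0 (ε / C') (by positivity)
  refine ⟨N, fun k hk => ?_⟩
  have hzk : -(z k i) = μ k * (-(b' i (x k i))) := by rw [hz]; ring
  have hznn : 0 ≤ -(z k i) := by
    rw [hzk]
    exact mul_nonneg (hμpos k).le (neg_nonneg.mpr (hb'nonpos i _ (hxpos k i)))
  have hminnn : 0 ≤ min (x k i) (-(z k i)) := le_min (hxpos k i).le hznn
  rw [Real.dist_eq, sub_zero, abs_of_nonneg hminnn]
  by_cases hx : x k i < ε
  · exact lt_of_le_of_lt (min_le_left _ _) hx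
  · push_neg at hx
    have hxM : x k i ∈ Set.Icc ε M := by
      refine ⟨hx, ?_⟩
      calc x k i ≤ |x k i| := le_abs_self _
        _ ≤ ‖x k‖ := hcoord k
        _ ≤ R := hR k
        _ ≤ M := le_max_left _ _
    have hb := hC _ hxM
    rw [Real.norm_eq_abs] at hb
    have hμk : μ k < ε / C' := by
      have := hN k hk
      rw [Real.dist_eq, sub_zero, abs_of_pos (hμpos k)] at this
      exact this
    have : -(z k i) < ε := by
      rw [hzk]
      calc μ k * (-(b' i (x k i))) ≤ μ k * C' :=
            mul_le_mul_of_nonneg_left ((neg_le_abs _).trans (hb.trans (le_max_left _ _)))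
              (hμpos k).le
        _ < (ε / C') * C' := by
            exact mul_lt_mul_of_pos_right hμk hC'pos
        _ = ε := div_mul_cancel₀ _ hC'pos.ne'
    exact lt_of_le_of_lt (min_le_right _ _) this
end

section
/- Let f : ℝ^n → ℝ be continuous and c : ℝ^n → ℝ^m be continuous. Let {x^k} ⊂ ℝ^n with x^k_i > 0 for all i and k, let ρ_k > 0 with ρ_k → 0, let {ŷ^k} ⊂ ℝ^m be bounded, and suppose there exists B ∈ ℝ such that f(x^k) + (1/(2ρ_k))‖c(x^k) + ρ_k ŷ^k‖² ≤ B for all k. Then every limit point x* of {x^k} is feasible for (P), i.e., c(x*) = 0 and x*_i ≥ 0 for all i. -/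
open Filter Topology

/-- feasibility of limit points under bounded augmented Lagrangian
values.
Let f : ℝ^n → ℝ and c : ℝ^n → ℝ^m be continuous.  Let {x^k} ⊂ ℝ^n with
x^k_i > 0 for all i and k, let ρ_k > 0 with ρ_k → 0, let {ŷ^k} ⊂ ℝ^m be bounded,
and suppose there exists B ∈ ℝ such that
f(x^k) + (1/(2ρ_k))‖c(x^k) + ρ_k ŷ^k‖² ≤ B for all k.  Then every limit point
x* of {x^k} is feasible for (P), i.e. c(x*) = 0 and x*_i ≥ 0 for all i. -/
theorem stmt3 {n m : ℕ}
    (f : EuclideanSpace ℝ (Fin n) → ℝ) (hf : Continuous f)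
    (c : EuclideanSpace ℝ (Fin n) → EuclideanSpace ℝ (Fin m)) (hc : Continuous c)
    (x : ℕ → EuclideanSpace ℝ (Fin n))
    (hxpos : ∀ k, ∀ i, 0 < x k i)
    (ρ : ℕ → ℝ) (hρpos : ∀ k, 0 < ρ k) (hρto0 : Tendsto ρ atTop (nhds 0))
    (yhat : ℕ → EuclideanSpace ℝ (Fin m))
    (hyhatbdd : ∃ R : ℝ, ∀ k, ‖yhat k‖ ≤ R)
    (B : ℝ)
    (hbound : ∀ k, f (x k) + (1 / (2 * ρ k)) * ‖c (x k) + ρ k • yhat k‖ ^ 2 ≤ B) :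
    ∀ xstar : EuclideanSpace ℝ (Fin n),
      (∃ φ : ℕ → ℕ, StrictMono φ ∧ Tendsto (fun k => x (φ k)) atTop (nhds xstar)) →
      c xstar = 0 ∧ ∀ i, 0 ≤ xstar i := by
  rintro xstar ⟨φ, hφ, hxconv⟩
  obtain ⟨R, hR⟩ := hyhatbdd
  have hφtop : Tendsto φ atTop atTop := hφ.tendsto_atTop
  have hρφ : Tendsto (fun k => ρ (φ k)) atTop (nhds 0) := hρto0.comp hφtop
  set u : ℕ → EuclideanSpace ℝ (Fin m) :=
    fun k => c (x (φ k)) + ρ (φ k) • yhat (φ k) with hu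
  -- bound on ‖u k‖²
  have hsq : ∀ k, ‖u k‖ ^ 2 ≤ 2 * ρ (φ k) * (B - f (x (φ k))) := by
    intro k
    have hb := hbound (φ k)
    have hρk := hρpos (φ k)
    have h1 : (1 / (2 * ρ (φ k))) * ‖u k‖ ^ 2 ≤ B - f (x (φ k)) := by
      have : f (x (φ k)) + 1 / (2 * ρ (φ k)) * ‖u k‖ ^ 2 ≤ B := hb
      linarith
    have h2 : 0 < 2 * ρ (φ k) := by linarith
    calc ‖u k‖ ^ 2 = (2 * ρ (φ k)) * ((1 / (2 * ρ (φ k))) * ‖u k‖ ^ 2) := by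
          field_simp
      _ ≤ (2 * ρ (φ k)) * (B - f (x (φ k))) := by
          exact mul_le_mul_of_nonneg_left h1 h2.le
  have hftend : Tendsto (fun k => f (x (φ k))) atTop (nhds (f xstar)) :=
    (hf.tendsto xstar).comp hxconv
  have hrhs : Tendsto (fun k => 2 * ρ (φ k) * (B - f (x (φ k)))) atTop (nhds 0) := by
    have := ((hρφ.const_mul 2).mul ((tendsto_const_nhds (x := B)).sub hftend))
    simpa using this
  have hsq0 : Tendsto (fun k => ‖u k‖ ^ 2) atTop (nhds 0) := by
    refine tendsto_of_tendsto_of_tendsto_of_le_of_le tendsto_const_nhds hrhs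
      (fun k => sq_nonneg _) hsq
  have hnorm0 : Tendsto (fun k => ‖u k‖) atTop (nhds 0) := by
    have := hsq0.sqrt
    simpa [Real.sqrt_sq (norm_nonneg _)] using this
  have hu0 : Tendsto u atTop (nhds 0) := by
    rwa [tendsto_zero_iff_norm_tendsto_zero]
  -- ρ • yhat → 0
  have hρy0 : Tendsto (fun k => ρ (φ k) • yhat (φ k)) atTop (nhds 0) := by
    rw [tendsto_zero_iff_norm_tendsto_zero]
    have hle : ∀ k, ‖ρ (φ k) • yhat (φ k)‖ ≤ ρ (φ k) * |R| := by
      intro k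
      rw [norm_smul]
      have h1 : ‖yhat (φ k)‖ ≤ |R| := (hR (φ k)).trans (le_abs_self R)
      have : ‖ρ (φ k)‖ = ρ (φ k) := abs_of_pos (hρpos (φ k))
      rw [this]
      exact mul_le_mul_of_nonneg_left h1 (hρpos (φ k)).le
    refine tendsto_of_tendsto_of_tendsto_of_le_of_le tendsto_const_nhds
      (by simpa using hρφ.mul_const |R|) (fun k => norm_nonneg _) hle
  have hc0 : Tendsto (fun k => c (x (φ k))) atTop (nhds 0) := by
    have := hu0.sub hρy0
    simpa [hu] using this
  have hcconv : Tendsto (fun k => c (x (φ k))) atTop (nhds (c xstar)) :=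
    (hc.tendsto xstar).comp hxconv
  refine ⟨tendsto_nhds_unique hcconv hc0, fun i => ?_⟩
  have hcoord : Tendsto (fun k => x (φ k) i) atTop (nhds (xstar i)) := by
    have hcont : Continuous fun v : EuclideanSpace ℝ (Fin n) => v i :=
      (continuous_apply i).comp (PiLp.continuous_ofLp 2 _)
    exact (hcont.tendsto xstar).comp hxconv
  exact le_of_tendsto_of_tendsto tendsto_const_nhds hcoord
    (Eventually.of_forall fun k => (hxpos (φ k) i).le)
end

section
/- Let f : ℝ^n → ℝ and c : ℝ^n → ℝ^m be continuously differentiable. Let sequences {x^k} ⊂ ℝ^n with x^k_i > 0 for all i,k, {z^k} ⊂ ℝ^n with z^k ≤ 0 componentwise, {y^k}, {ŷ^k} ⊂ ℝ^m with {ŷ^k} bounded, ε_k ≥ 0 with ε_k → 0, and ρ_k > 0 with ρ_k → 0, satisfy ‖∇f(x^k) + ∇c(x^k)ᵀy^k + z^k‖ ≤ ε_k, ‖c(x^k) + ρ_k(ŷ^k − y^k)‖ ≤ 2ε_k, and min{x^k_i, −z^k_i} → 0 for each i. If x^k → x* and ρ_k z^k → z̃* along a subsequence indexed by K, then x* ≥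 0, z̃* ≤ 0, ∇c(x*)ᵀc(x*) + z̃* = 0, and min{x*_i, −z̃*_i} = 0 for all i; in particular, x* is a KKT stationary point of the feasibility problem: minimize (1/2)‖c(x)‖² subject to x ≥ 0. -/
/-!
Scaling the stationarity residual by `ρₖ → 0` kills the objective gradient, and the feasibility
residual shows that `ρₖ yᵏ → c(x*)`; so in the limit `∇c(x*)ᵀ c(x*) + z̃* = 0`. Complementarity
passes to the limit because, where `x*ᵢ > 0`, the vanishing minimum forces `zᵏᵢ → 0`, hence
`z̃*ᵢ = lim ρₖ zᵏᵢ = 0`.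
-/

open Filter Topology

section Limits

variable {ι : Type*} {l : Filter ι}

theorem tendsto_smul_of_tendsto_add_smul_sub {F : Type*} [NormedAddCommGroup F]
    [NormedSpace ℝ F] {c y yhat : ι → F} {ρ : ι → ℝ} {cstar : F} {R : ℝ}
    (hc : Tendsto c l (𝓝 cstar)) (hρ : Tendsto ρ l (𝓝 0)) (hyhat : ∀ k, ‖yhat k‖ ≤ R)
    (hres : Tendsto (fun k => c k + ρ k • (yhat k - y k)) l (𝓝 0)) :
    Tendsto (fun k => ρ k • y k) l (𝓝 cstar) := by
  have hρyhat : Tendsto (fun k => ρ k • yhat k) l (𝓝 0) :=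
    hρ.zero_smul_isBoundedUnder_le (isBoundedUnder_of ⟨R, hyhat⟩)
  simpa [smul_sub] using (hc.add hρyhat).sub hres

theorem tendsto_smul_of_tendsto_add_apply_add {E F : Type*} [NormedAddCommGroup E]
    [NormedSpace ℝ E] [NormedAddCommGroup F] [NormedSpace ℝ F]
    {g z : ι → E} {y : ι → F} {A : ι → F →L[ℝ] E} {Astar : F →L[ℝ] E} {gstar : E} {w : F}
    {ρ : ι → ℝ} (hg : Tendsto g l (𝓝 gstar)) (hA : Tendsto A l (𝓝 Astar))
    (hρ : Tendsto ρ l (𝓝 0)) (hy : Tendsto (fun k => ρ k • y k) l (𝓝 w))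
    (hres : Tendsto (fun k => g k + A k (y k) + z k) l (𝓝 0)) :
    Tendsto (fun k => ρ k • z k) l (𝓝 (-Astar w)) := by
  have hAy : Tendsto (fun k => A k (ρ k • y k)) l (𝓝 (Astar w)) :=
    (isBoundedBilinearMap_apply.continuous.tendsto _).comp (hA.prodMk_nhds hy)
  have h := ((hρ.smul hres).sub (hρ.smul hg)).sub hAy
  simp only [zero_smul, sub_zero, zero_sub] at h
  refine h.congr fun k => ?_
  simp only [map_smul, smul_add]
  abel

theorem tendsto_of_tendsto_min_of_tendsto_pos {a b : ι → ℝ} {α : ℝ}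
    (ha : Tendsto a l (𝓝 α)) (hα : 0 < α) (hmin : Tendsto (fun k => min (a k) (b k)) l (𝓝 0)) :
    Tendsto b l (𝓝 0) := by
  refine hmin.congr' ?_
  filter_upwards [ha.eventually (eventually_gt_nhds (half_lt_self hα)),
    hmin.eventually (eventually_lt_nhds (half_pos hα))] with k hak hmink
  exact min_eq_right (le_of_not_ge fun hba => by rw [min_eq_left hba] at hmink; linarith)

theorem min_eq_zero_of_tendsto_min [l.NeBot] {a b ρ : ι → ℝ} {α β : ℝ}
    (ha : Tendsto a l (𝓝 α)) (hα : 0 ≤ α) (hβ : 0 ≤ β) (hρ : Tendsto ρ l (𝓝 0))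
    (hρb : Tendsto (fun k => ρ k * b k) l (𝓝 β))
    (hmin : Tendsto (fun k => min (a k) (b k)) l (𝓝 0)) :
    min α β = 0 := by
  rcases hα.eq_or_lt with rfl | hα
  · exact min_eq_left hβ
  · have hb := tendsto_of_tendsto_min_of_tendsto_pos ha hα hmin
    have hβ0 : β = 0 := tendsto_nhds_unique hρb (by simpa using hρ.mul hb)
    rw [hβ0, min_eq_right hα.le]

end Limits

theorem stmt4_general {n m : ℕ}
    (f : EuclideanSpace ℝ (Fin n) → ℝ)
    (c : EuclideanSpace ℝ (Fin n) → EuclideanSpace ℝ (Fin m))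
    (hf : ContDiff ℝ 1 f) (hc : ContDiff ℝ 1 c)
    (x z : ℕ → EuclideanSpace ℝ (Fin n))
    (y yhat : ℕ → EuclideanSpace ℝ (Fin m))
    (hxpos : ∀ k, ∀ i, 0 < x k i)
    (hznonpos : ∀ k, ∀ i, z k i ≤ 0)
    (hyhatbdd : ∃ R : ℝ, ∀ k, ‖yhat k‖ ≤ R)
    (ε : ℕ → ℝ) (hεto0 : Tendsto ε atTop (nhds 0))
    (ρ : ℕ → ℝ) (hρpos : ∀ k, 0 < ρ k) (hρto0 : Tendsto ρ atTop (nhds 0))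
    (hstat : ∀ k, ‖gradient f (x k) + (fderiv ℝ c (x k)).adjoint (y k) + z k‖ ≤ ε k)
    (hfeas : ∀ k, ‖c (x k) + ρ k • (yhat k - y k)‖ ≤ 2 * ε k)
    (hcompl : ∀ i, Tendsto (fun k => min (x k i) (-(z k i))) atTop (nhds 0))
    (xstar ztilde : EuclideanSpace ℝ (Fin n))
    (φ : ℕ → ℕ) (hφ : StrictMono φ)
    (hxlim : Tendsto (fun k => x (φ k)) atTop (nhds xstar))
    (hzlim : Tendsto (fun k => ρ (φ k) • z (φ k)) atTop (nhds ztilde)) :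
    (∀ i, 0 ≤ xstar i) ∧ (∀ i, ztilde i ≤ 0) ∧
    (fderiv ℝ c xstar).adjoint (c xstar) + ztilde = 0 ∧
    (∀ i, min (xstar i) (-(ztilde i)) = 0) := by
  obtain ⟨R, hR⟩ := hyhatbdd
  have hφtop := hφ.tendsto_atTop
  have hρ := hρto0.comp hφtop
  have hε := hεto0.comp hφtop
  have hxi (i) : Tendsto (fun k => x (φ k) i) atTop (𝓝 (xstar i)) :=
    ((EuclideanSpace.proj i).continuous.tendsto xstar).comp hxlim
  have hzi (i) : Tendsto (fun k => ρ (φ k) * z (φ k) i) atTop (𝓝 (ztilde i)) :=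
    ((EuclideanSpace.proj i).continuous.tendsto ztilde).comp hzlim
  have hx0 (i) : 0 ≤ xstar i := ge_of_tendsto' (hxi i) fun k => (hxpos _ i).le
  have hz0 (i) : ztilde i ≤ 0 :=
    le_of_tendsto' (hzi i) fun k => mul_nonpos_of_nonneg_of_nonpos (hρpos _).le (hznonpos _ i)
  have hρy : Tendsto (fun k => ρ (φ k) • y (φ k)) atTop (𝓝 (c xstar)) :=
    tendsto_smul_of_tendsto_add_smul_sub ((hc.continuous.tendsto xstar).comp hxlim) hρ
      (fun k => hR (φ k))
      (squeeze_zero_norm (fun k => hfeas (φ k)) (by simpa using hε.const_mul 2))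
  have hgrad : Continuous (gradient f) :=
    (InnerProductSpace.toDual ℝ _).symm.continuous.comp (hf.continuous_fderiv one_ne_zero)
  have hjac : Continuous fun p => (fderiv ℝ c p).adjoint :=
    ContinuousLinearMap.adjoint.continuous.comp (hc.continuous_fderiv one_ne_zero)
  have hzt : ztilde = -(fderiv ℝ c xstar).adjoint (c xstar) :=
    tendsto_nhds_unique hzlim <| tendsto_smul_of_tendsto_add_apply_add
      ((hgrad.tendsto xstar).comp hxlim) ((hjac.tendsto xstar).comp hxlim) hρ hρy
      (squeeze_zero_norm (fun k => hstat (φ k)) hε)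
  refine ⟨hx0, hz0, by rw [hzt, add_neg_cancel], fun i => ?_⟩
  exact min_eq_zero_of_tendsto_min (hxi i) (hx0 i) (neg_nonneg.mpr (hz0 i)) hρ
    (by simpa using (hzi i).neg) ((hcompl i).comp hφtop)

/-- Proposition 2, stationarity for the feasibility problem.
Let f : ℝ^n → ℝ and c : ℝ^n → ℝ^m be continuously differentiable.  Let
{x^k} ⊂ ℝ^n with x^k_i > 0 for all i,k, {z^k} ⊂ ℝ^n with z^k ≤ 0 componentwise,
{y^k}, {ŷ^k} ⊂ ℝ^m with {ŷ^k} bounded, ε_k ≥ 0 with ε_k → 0, and ρ_k > 0 with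
ρ_k → 0, satisfy ‖∇f(x^k) + ∇c(x^k)ᵀy^k + z^k‖ ≤ ε_k,
‖c(x^k) + ρ_k(ŷ^k − y^k)‖ ≤ 2ε_k, and min{x^k_i, −z^k_i} → 0 for each i.
If x^k → x* and ρ_k z^k → z̃* along a subsequence indexed by K, then x* ≥ 0,
z̃* ≤ 0, ∇c(x*)ᵀc(x*) + z̃* = 0, and min{x*_i, −z̃*_i} = 0 for all i; in
particular, x* is a KKT stationary point of the feasibility problem
min_{x ≥ 0} (1/2)‖c(x)‖². -/
theorem stmt4 {n m : ℕ}
    (f : EuclideanSpace ℝ (Fin n) → ℝ)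
    (c : EuclideanSpace ℝ (Fin n) → EuclideanSpace ℝ (Fin m))
    (hf : ContDiff ℝ 1 f) (hc : ContDiff ℝ 1 c)
    (x z : ℕ → EuclideanSpace ℝ (Fin n))
    (y yhat : ℕ → EuclideanSpace ℝ (Fin m))
    (hxpos : ∀ k, ∀ i, 0 < x k i)
    (hznonpos : ∀ k, ∀ i, z k i ≤ 0)
    (hyhatbdd : ∃ R : ℝ, ∀ k, ‖yhat k‖ ≤ R)
    (ε : ℕ → ℝ) (hεnonneg : ∀ k, 0 ≤ ε k) (hεto0 : Tendsto ε atTop (nhds 0))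
    (ρ : ℕ → ℝ) (hρpos : ∀ k, 0 < ρ k) (hρto0 : Tendsto ρ atTop (nhds 0))
    (hstat : ∀ k, ‖gradient f (x k) + (fderiv ℝ c (x k)).adjoint (y k) + z k‖ ≤ ε k)
    (hfeas : ∀ k, ‖c (x k) + ρ k • (yhat k - y k)‖ ≤ 2 * ε k)
    (hcompl : ∀ i, Tendsto (fun k => min (x k i) (-(z k i))) atTop (nhds 0))
    (xstar ztilde : EuclideanSpace ℝ (Fin n))
    (φ : ℕ → ℕ) (hφ : StrictMono φ)
    (hxlim : Tendsto (fun k => x (φ k)) atTop (nhds xstar))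
    (hzlim : Tendsto (fun k => ρ (φ k) • z (φ k)) atTop (nhds ztilde)) :
    (∀ i, 0 ≤ xstar i) ∧ (∀ i, ztilde i ≤ 0) ∧
    (fderiv ℝ c xstar).adjoint (c xstar) + ztilde = 0 ∧
    (∀ i, min (xstar i) (-(ztilde i)) = 0) :=
  stmt4_general f c hf hc x z y yhat hxpos hznonpos hyhatbdd ε hεto0 ρ hρpos hρto0 hstat hfeas
    hcompl xstar ztilde φ hφ hxlim hzlim
end

section
/- Let f : ℝ^n → ℝ and c : ℝ^n → ℝ^m be continuously differentiable, and let x* be a local minimizer of (P), i.e., x* is feasible and there is a neighborhood U of x* such that f(x*) ≤ f(x) for all feasible x ∈ U. Then x* is an AKKT stationary point for (P): there exist sequences {x^k}, {z^k} ⊂ ℝ^n and {y^k} ⊂ ℝ^m such that x^k → x*, ∇f(x^k) + ∇c(x^k)ᵀy^k + z^k → 0, and min{x^k_i, −z^k_i} → 0 for each i. -/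
open Filter Topology

open scoped RealInnerProductSpace

/-!
Exterior penalty. Minimize `P_k x = f x + k ‖c x‖² + ‖x - x*‖²` over the compact set
`closedBall x* δ ∩ {x ≥ 0}`, on which `x*` minimizes `f` among feasible points. Since
`P_k (x^k) ≤ P_k x* = f x*`, the constraint violation is `O(1/k)`, and any limit point of the
minimizers `x^k` is feasible with `f x̄ + ‖x̄ - x*‖² ≤ f x*`, hence equals `x*`. So `x^k` eventually
lies in the open ball, where optimality on the orthant gives `min (x^k_i) (∇P_k(x^k)_i) = 0`.
With `y^k = 2k c(x^k)` and `z^k = -(∇f(x^k) + ∇c(x^k)ᵀ y^k)`, `-z^k` differs from `∇P_k(x^k)` only by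
`2 (x^k - x*) → 0`.
-/

section Penalty

variable {E F : Type*}

section Normed

variable [NormedAddCommGroup E] [NormedAddCommGroup F]

def penalty (f : E → ℝ) (c : E → F) (x₀ : E) (k : ℝ) (x : E) : ℝ :=
  f x + k * ‖c x‖ ^ 2 + ‖x - x₀‖ ^ 2

variable {f : E → ℝ} {c : E → F} {x₀ : E} {K : Set E} {xs : ℕ → E}

theorem penalty_self (hc : c x₀ = 0) (k : ℝ) : penalty f c x₀ k x₀ = f x₀ := by
  simp [penalty, hc]

theorem continuous_penalty (hf : Continuous f) (hc : Continuous c) (k : ℝ) :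
    Continuous (penalty f c x₀ k) := by
  unfold penalty
  fun_prop

theorem tendsto_constraint_of_penalty_le (hf : BddBelow (f '' K)) (hxs : ∀ k, xs k ∈ K)
    (hle : ∀ k : ℕ, penalty f c x₀ k (xs k) ≤ f x₀) :
    Tendsto (fun k => c (xs k)) atTop (𝓝 0) := by
  obtain ⟨B, hB⟩ := hf
  have hbound : ∀ k : ℕ, 1 ≤ k → ‖c (xs k)‖ ^ 2 ≤ (f x₀ - B) / k := fun k hk => by
    have hfB : B ≤ f (xs k) := hB ⟨xs k, hxs k, rfl⟩
    have hk : (0 : ℝ) < k := by exact_mod_cast hk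
    have hpen := hle k
    unfold penalty at hpen
    rw [le_div_iff₀ hk]
    nlinarith [sq_nonneg ‖xs k - x₀‖]
  have hsq : Tendsto (fun k => ‖c (xs k)‖ ^ 2) atTop (𝓝 0) :=
    squeeze_zero' (.of_forall fun k => sq_nonneg _)
      (eventually_atTop.2 ⟨1, hbound⟩) (tendsto_const_div_atTop_nhds_zero_nat _)
  rw [tendsto_zero_iff_norm_tendsto_zero]
  simpa [Real.sqrt_sq (norm_nonneg _)] using hsq.sqrt

theorem tendsto_of_penalty_le (hK : IsCompact K) (hf : ContinuousOn f K) (hc : ContinuousOn c K)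
    (hmin : ∀ x ∈ K, c x = 0 → f x₀ ≤ f x) (hxs : ∀ k, xs k ∈ K)
    (hle : ∀ k : ℕ, penalty f c x₀ k (xs k) ≤ f x₀) : Tendsto xs atTop (𝓝 x₀) := by
  have hc₀ := tendsto_constraint_of_penalty_le (hK.bddBelow_image hf) hxs hle
  refine tendsto_of_subseq_tendsto fun ns hns => ?_
  obtain ⟨x, hxK, φ, hφ, hlim⟩ := hK.tendsto_subseq fun j => hxs (ns j)
  refine ⟨φ, ?_⟩
  have hlimK : Tendsto (xs ∘ ns ∘ φ) atTop (𝓝[K] x) :=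
    tendsto_nhdsWithin_iff.2 ⟨hlim, .of_forall fun j => hxs _⟩
  have hcx : c x = 0 :=
    tendsto_nhds_unique ((hc x hxK).tendsto.comp hlimK) (hc₀.comp (hns.comp hφ.tendsto_atTop))
  have hfx : f x + ‖x - x₀‖ ^ 2 ≤ f x₀ := by
    refine le_of_tendsto (((hf x hxK).tendsto.comp hlimK).add ((hlim.sub_const x₀).norm.pow 2))
      (.of_forall fun j => ?_)
    have hpen := hle (ns (φ j))
    unfold penalty at hpen
    have : 0 ≤ (ns (φ j) : ℝ) * ‖c (xs (ns (φ j)))‖ ^ 2 := by positivity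
    simp only [Function.comp_apply]
    linarith
  obtain rfl : x = x₀ := by
    rw [← sub_eq_zero, ← norm_le_zero_iff]
    nlinarith [hmin x hxK hcx, norm_nonneg (x - x₀)]
  exact hlim

end Normed

variable [NormedAddCommGroup E] [InnerProductSpace ℝ E] [CompleteSpace E]
  [NormedAddCommGroup F] [InnerProductSpace ℝ F] [CompleteSpace F]

theorem hasGradientAt_penalty {f : E → ℝ} {c : E → F} {x₀ x g : E} {A : E →L[ℝ] F}
    (hf : HasGradientAt f g x) (hc : HasFDerivAt c A x) (k : ℝ) :
    HasGradientAt (penalty f c x₀ k) (g + A.adjoint ((2 * k) • c x) + (2 : ℝ) • (x - x₀)) x := by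
  rw [hasGradientAt_iff_hasFDerivAt] at hf ⊢
  refine ((hf.add (hc.norm_sq.const_mul k)).add
    ((hasFDerivAt_id x).sub_const x₀).norm_sq).congr_fderiv ?_
  ext v
  simp [ContinuousLinearMap.adjoint_inner_left]
  ring

end Penalty

theorem IsLocalMinOn.inner_gradient_sub_nonneg {E : Type*} [NormedAddCommGroup E]
    [InnerProductSpace ℝ E] [CompleteSpace E] {F : E → ℝ} {s : Set E} {x y g : E}
    (hs : Convex ℝ s) (hmin : IsLocalMinOn F s x) (hF : HasGradientAt F g x) (hx : x ∈ s)
    (hy : y ∈ s) : 0 ≤ ⟪g, y - x⟫ :=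
  hmin.hasFDerivWithinAt_nonneg (hasGradientAt_iff_hasFDerivAt.1 hF).hasFDerivWithinAt
    (sub_mem_posTangentConeAt_of_segment_subset (hs.segment_subset hx hy))

section Orthant

variable {ι : Type*}

def nonnegOrthant (ι : Type*) : Set (EuclideanSpace ℝ ι) := {x | ∀ i, 0 ≤ x i}

theorem convex_nonnegOrthant : Convex ℝ (nonnegOrthant ι) := fun x hx y hy a b ha hb _ i => by
  simpa using add_nonneg (mul_nonneg ha (hx i)) (mul_nonneg hb (hy i))

theorem isClosed_nonnegOrthant : IsClosed (nonnegOrthant ι) := by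
  simp only [nonnegOrthant, Set.ofPred_forall]
  exact isClosed_iInter fun i => isClosed_le continuous_const (EuclideanSpace.proj i).continuous

theorem min_apply_gradient_eq_zero_of_isLocalMinOn [Fintype ι] [DecidableEq ι]
    {F : EuclideanSpace ℝ ι → ℝ} {x g : EuclideanSpace ℝ ι} (hmin : IsLocalMinOn F (nonnegOrthant ι) x)
    (hF : HasGradientAt F g x) (hx : x ∈ nonnegOrthant ι) (i : ι) : min (x i) (g i) = 0 := by
  have hg : 0 ≤ g i := by
    have h := hmin.inner_gradient_sub_nonneg convex_nonnegOrthant hF hx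
      (y := x + EuclideanSpace.single i 1) fun j => by
        simpa using add_nonneg (hx j) (by by_cases h : j = i <;> simp [h])
    simpa [EuclideanSpace.inner_single_right] using h
  have hxg : x i * g i ≤ 0 := by
    have h := hmin.inner_gradient_sub_nonneg convex_nonnegOrthant hF hx
      (y := x - x i • EuclideanSpace.single i 1) fun j => by
        by_cases h : j = i
        · simp [h]
        · simpa [h] using hx j
    simpa [real_inner_smul_right, EuclideanSpace.inner_single_right, mul_comm] using h
  rcases (hx i).eq_or_lt with hxi | hxi
  · rw [← hxi, min_eq_left hg]
  · rw [le_antisymm (nonpos_of_mul_nonpos_right hxg hxi) hg, min_eq_right hxi.le]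

end Orthant

theorem tendsto_min_add_of_min_eq_zero {α : Type*} {l : Filter α} {a b e : α → ℝ}
    (hab : ∀ᶠ k in l, min (a k) (b k) = 0) (he : Tendsto e l (𝓝 0)) :
    Tendsto (fun k => min (a k) (b k + e k)) l (𝓝 0) := by
  refine squeeze_zero_norm' ?_ (by simpa using he.abs)
  filter_upwards [hab] with k hk
  have h := abs_min_sub_min_le_max (a k) (b k + e k) (a k) (b k)
  rwa [hk, sub_zero, sub_self, abs_zero, add_sub_cancel_left, max_eq_right (abs_nonneg _)] at h

/-- local minimizers are AKKT stationary, no constraint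
qualification needed.
Let f : ℝ^n → ℝ and c : ℝ^n → ℝ^m be continuously differentiable, and let x*
be a local minimizer of (P), i.e. x* is feasible and there is a neighborhood U
of x* such that f(x*) ≤ f(x) for all feasible x ∈ U.  Then x* is an AKKT
stationary point for (P): there exist sequences {x^k}, {z^k} ⊂ ℝ^n and
{y^k} ⊂ ℝ^m such that x^k → x*, ∇f(x^k) + ∇c(x^k)ᵀy^k + z^k → 0, and
min{x^k_i, −z^k_i} → 0 for each i. -/
theorem stmt14 {n m : ℕ}
    (f : EuclideanSpace ℝ (Fin n) → ℝ)
    (c : EuclideanSpace ℝ (Fin n) → EuclideanSpace ℝ (Fin m))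
    (hf : ContDiff ℝ 1 f) (hc : ContDiff ℝ 1 c)
    (xstar : EuclideanSpace ℝ (Fin n))
    (hfeas : (∀ i, 0 ≤ xstar i) ∧ c xstar = 0)
    (hlocmin : ∃ U ∈ nhds xstar,
      ∀ x ∈ U, (∀ i, 0 ≤ x i) → c x = 0 → f xstar ≤ f x) :
    ∃ (xs zs : ℕ → EuclideanSpace ℝ (Fin n)) (ys : ℕ → EuclideanSpace ℝ (Fin m)),
      Tendsto xs atTop (nhds xstar) ∧
      Tendsto (fun k => gradient f (xs k) + (fderiv ℝ c (xs k)).adjoint (ys k) + zs k)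
        atTop (nhds 0) ∧
      ∀ i, Tendsto (fun k => min (xs k i) (-(zs k i))) atTop (nhds 0) := by
  obtain ⟨hxstar, hcxstar⟩ := hfeas
  obtain ⟨U, hU, hmin⟩ := hlocmin
  obtain ⟨δ, hδ, hδU⟩ := Metric.nhds_basis_closedBall.mem_iff.1 hU
  set K := Metric.closedBall xstar δ ∩ nonnegOrthant (Fin n)
  have hK : IsCompact K := (isCompact_closedBall _ _).inter_right isClosed_nonnegOrthant
  have hxstarK : xstar ∈ K := ⟨Metric.mem_closedBall_self hδ.le, hxstar⟩
  choose xs hxsK hxsmin using fun k : ℕ => hK.exists_isMinOn ⟨xstar, hxstarK⟩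
    (continuous_penalty (x₀ := xstar) hf.continuous hc.continuous k).continuousOn
  have hlim : Tendsto xs atTop (𝓝 xstar) :=
    tendsto_of_penalty_le hK hf.continuous.continuousOn hc.continuous.continuousOn
      (fun x hx => hmin x (hδU hx.1) hx.2) hxsK
      fun k => (hxsmin k hxstarK).trans_eq (penalty_self hcxstar k)
  set ys := fun k : ℕ => (2 * (k : ℝ)) • c (xs k)
  refine ⟨xs, fun k => -(gradient f (xs k) + (fderiv ℝ c (xs k)).adjoint (ys k)), ys, hlim,
    by simp, fun i => ?_⟩
  have hkkt : ∀ᶠ k in atTop, min (xs k i) ((gradient f (xs k) + (fderiv ℝ c (xs k)).adjoint (ys k)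
      + (2 : ℝ) • (xs k - xstar)) i) = 0 := by
    filter_upwards [hlim.eventually (Metric.ball_mem_nhds xstar hδ)] with k hk
    have hloc : IsLocalMinOn (penalty f c xstar k) (nonnegOrthant (Fin n)) (xs k) := by
      have h := (hxsmin k).localize
      rwa [IsLocalMinOn, nhdsWithin_inter_of_mem
        (mem_nhdsWithin_of_mem_nhds (Metric.closedBall_mem_nhds_of_mem hk))] at h
    exact min_apply_gradient_eq_zero_of_isLocalMinOn hloc
      (hasGradientAt_penalty (hf.differentiable one_ne_zero _).hasGradientAt
        (hc.differentiable one_ne_zero _).hasFDerivAt k) (hxsK k).2 i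
  have hprox : Tendsto (fun k => 2 * (xstar i - xs k i)) atTop (𝓝 0) := by
    have hi : Tendsto (fun k => xs k i) atTop (𝓝 (xstar i)) :=
      ((EuclideanSpace.proj i).continuous.tendsto xstar).comp hlim
    simpa using (hi.const_sub (xstar i)).const_mul 2
  convert tendsto_min_add_of_min_eq_zero hkkt hprox using 3 with k
  simp only [neg_add_rev, neg_neg, PiLp.add_apply, PiLp.neg_apply, PiLp.smul_apply,
    PiLp.sub_apply, smul_eq_mul]
  ring
end
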